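/- In the saddle-point setting, with the block-diagonal preconditioner M_D = [[F, 0],[0, H2]] and H = blockdiag(H1, H2), the inverse of the preconditioned matrix satisfies ‖(M_D⁻¹K)⁻¹‖_H ≤ 1 + C₁ + (C₁² + C₁ + 1)(1 + η)²/C₂². -/

import Mathlib

/-!
Write `(M_D⁻¹K)⁻¹ v = u`, i.e. `K u = M_D v`, with `v = (a, b)`, `u = (x, y)`, and put
`z = a - x`. Then `F z = Bᵀ y` and `B z = B a - H₂ b`. Testing the first equation with `z`
gives `‖z‖²_{H₁} = zᵀ F z = yᵀ B z`, hence `‖z‖ ≤ C₁ ‖y‖` and `‖z‖² ≤ ‖y‖ (C₁ ‖a‖ + ‖b‖)`,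
while the inf-sup condition and `F = H₁ + N` give `C₂ ‖y‖ ≤ ‖F z‖_{H₁⁻¹} ≤ (1 + η) ‖z‖`.
Combining, `‖y‖ ≤ (1 + η)²/C₂² (C₁ ‖a‖ + ‖b‖)` and `‖x‖ ≤ ‖a‖ + C₁ ‖y‖`. For `v = 0` the same
estimate shows that `K` is invertible.
-/

open Matrix

/-- The `H`-norm of a vector: `‖u‖_H = (uᵀ H u)^{1/2}`. -/
noncomputable def vnorm {α : Type*} [Fintype α] (H : Matrix α α ℝ) (u : α → ℝ) : ℝ :=
  Real.sqrt (u ⬝ᵥ (H *ᵥ u))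

/-- The weighted operator norm `‖M‖_{H1,H2} = sup_{v ≠ 0} ‖M v‖_{H2} / ‖v‖_{H1}`.
For a square matrix, `‖M‖_H = wnorm H H M`; the spectral norm is `wnorm 1 1 M`. -/
noncomputable def wnorm {α β : Type*} [Fintype α] [Fintype β]
    (H1 : Matrix α α ℝ) (H2 : Matrix β β ℝ) (M : Matrix β α ℝ) : ℝ :=
  sSup {r : ℝ | ∃ v : α → ℝ, v ≠ 0 ∧ r = vnorm H2 (M *ᵥ v) / vnorm H1 v}

section VNorm

variable {α : Type*} [Fintype α] {H : Matrix α α ℝ}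

lemma vnorm_nonneg (H : Matrix α α ℝ) (u : α → ℝ) : 0 ≤ vnorm H u := Real.sqrt_nonneg _

@[simp]
lemma vnorm_zero (H : Matrix α α ℝ) : vnorm H 0 = 0 := by simp [vnorm]

lemma vnorm_sq (hH : H.PosSemidef) (u : α → ℝ) : vnorm H u ^ 2 = u ⬝ᵥ (H *ᵥ u) :=
  Real.sq_sqrt (by simpa using hH.dotProduct_mulVec_nonneg u)

lemma vnorm_pos (hH : H.PosDef) {u : α → ℝ} (hu : u ≠ 0) : 0 < vnorm H u :=
  Real.sqrt_pos.mpr (by simpa using hH.dotProduct_mulVec_pos hu)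

lemma vnorm_smul (H : Matrix α α ℝ) (c : ℝ) (u : α → ℝ) :
    vnorm H (c • u) = |c| * vnorm H u := by
  rw [vnorm, vnorm, mulVec_smul, dotProduct_smul, smul_dotProduct, smul_eq_mul, smul_eq_mul,
    ← mul_assoc, ← sq, Real.sqrt_mul (sq_nonneg c), Real.sqrt_sq_eq_abs]

lemma continuous_vnorm (H : Matrix α α ℝ) : Continuous (vnorm H) := by
  unfold vnorm; fun_prop

open scoped MatrixOrder in
lemma exists_vnorm_eq_norm (hH : H.PosSemidef) :
    ∃ T : (α → ℝ) →ₗ[ℝ] EuclideanSpace ℝ α,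
      (∀ u w, u ⬝ᵥ (H *ᵥ w) = inner ℝ (T u) (T w)) ∧ ∀ u, vnorm H u = ‖T u‖ := by
  classical
  obtain ⟨A, rfl⟩ := CStarAlgebra.nonneg_iff_eq_star_mul_self.mp hH.nonneg
  set T := (WithLp.linearEquiv 2 ℝ (α → ℝ)).symm.toLinearMap ∘ₗ A.mulVecLin
  have hT : ∀ u w, u ⬝ᵥ ((star A * A) *ᵥ w) = inner ℝ (T u) (T w) := fun u w => by
    change _ = inner ℝ (WithLp.toLp 2 (A *ᵥ u)) (WithLp.toLp 2 (A *ᵥ w))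
    rw [EuclideanSpace.inner_toLp_toLp, ← mulVec_mulVec, dotProduct_mulVec,
      star_eq_conjTranspose, conjTranspose_eq_transpose_of_trivial, vecMul_transpose,
      star_trivial, dotProduct_comm]
  refine ⟨T, hT, fun u => ?_⟩
  rw [vnorm, hT, real_inner_self_eq_norm_sq, Real.sqrt_sq (norm_nonneg _)]

lemma dotProduct_mulVec_le_vnorm_mul_vnorm (hH : H.PosSemidef) (u w : α → ℝ) :
    u ⬝ᵥ (H *ᵥ w) ≤ vnorm H u * vnorm H w := by
  obtain ⟨T, hT, hnorm⟩ := exists_vnorm_eq_norm hH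
  simpa only [hT, hnorm] using real_inner_le_norm (T u) (T w)

lemma vnorm_add_le (hH : H.PosSemidef) (u w : α → ℝ) :
    vnorm H (u + w) ≤ vnorm H u + vnorm H w := by
  obtain ⟨T, -, hnorm⟩ := exists_vnorm_eq_norm hH
  simpa only [hnorm, map_add] using norm_add_le (T u) (T w)

lemma vnorm_neg (H : Matrix α α ℝ) (u : α → ℝ) : vnorm H (-u) = vnorm H u := by
  simpa using vnorm_smul H (-1) u

lemma vnorm_sub_le (hH : H.PosSemidef) (u w : α → ℝ) :
    vnorm H (u - w) ≤ vnorm H u + vnorm H w := by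
  simpa only [sub_eq_add_neg, vnorm_neg] using vnorm_add_le hH u (-w)

lemma vnorm_sq_eq_dotProduct_mulVec (hH : H.PosSemidef) {F : Matrix α α ℝ}
    (hF : H = ((1 : ℝ)/2) • (F + Fᵀ)) (z : α → ℝ) :
    vnorm H z ^ 2 = z ⬝ᵥ (F *ᵥ z) := by
  have hT : z ⬝ᵥ (Fᵀ *ᵥ z) = z ⬝ᵥ (F *ᵥ z) := by
    rw [mulVec_transpose, dotProduct_comm, ← dotProduct_mulVec]
  rw [vnorm_sq hH, hF, smul_mulVec, add_mulVec, dotProduct_smul, dotProduct_add, hT,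
    smul_eq_mul]
  ring

variable [DecidableEq α]

lemma isUnit_det_of_eq_symmPart (hH : H.PosDef) {F : Matrix α α ℝ}
    (hF : H = ((1 : ℝ)/2) • (F + Fᵀ)) : IsUnit F.det := by
  rw [isUnit_iff_ne_zero]
  intro h
  obtain ⟨z, hz, hFz⟩ := exists_mulVec_eq_zero_iff.mpr h
  have h0 := vnorm_sq_eq_dotProduct_mulVec hH.posSemidef hF z
  rw [hFz, dotProduct_zero, pow_eq_zero_iff two_ne_zero] at h0
  exact (vnorm_pos hH hz).ne' h0

lemma vnorm_inv_mulVec (hH : H.PosDef) (u : α → ℝ) : vnorm H⁻¹ (H *ᵥ u) = vnorm H u := by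
  rw [vnorm, vnorm, mulVec_mulVec, nonsing_inv_mul _ ((isUnit_iff_isUnit_det H).mp hH.isUnit),
    one_mulVec, dotProduct_comm]

lemma dotProduct_le_vnorm_mul_vnorm_inv (hH : H.PosDef) (u w : α → ℝ) :
    u ⬝ᵥ w ≤ vnorm H u * vnorm H⁻¹ w := by
  have hw : H *ᵥ (H⁻¹ *ᵥ w) = w := by
    rw [mulVec_mulVec, mul_nonsing_inv _ ((isUnit_iff_isUnit_det H).mp hH.isUnit), one_mulVec]
  calc u ⬝ᵥ w = u ⬝ᵥ (H *ᵥ (H⁻¹ *ᵥ w)) := by rw [hw]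
    _ ≤ vnorm H u * vnorm H (H⁻¹ *ᵥ w) :=
        dotProduct_mulVec_le_vnorm_mul_vnorm hH.posSemidef _ _
    _ = vnorm H u * vnorm H⁻¹ w := by rw [← vnorm_inv_mulVec hH (H⁻¹ *ᵥ w), hw]

end VNorm

section WNorm

variable {α β : Type*} [Fintype α] [Fintype β] {H1 : Matrix α α ℝ} {H2 : Matrix β β ℝ}
  {M : Matrix β α ℝ} {c : ℝ}

lemma bddAbove_wnorm_set (hH1 : H1.PosDef) (H2 : Matrix β β ℝ) (M : Matrix β α ℝ) :
    BddAbove {r : ℝ | ∃ v : α → ℝ, v ≠ 0 ∧ r = vnorm H2 (M *ᵥ v) / vnorm H1 v} := by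
  set f : (α → ℝ) → ℝ := fun v => vnorm H2 (M *ᵥ v) / vnorm H1 v
  have hf : ContinuousOn f (Metric.sphere 0 1) := by
    refine ((continuous_vnorm H2).comp (by fun_prop)).continuousOn.div
      (continuous_vnorm H1).continuousOn fun v hv => (vnorm_pos hH1 ?_).ne'
    exact ne_zero_of_mem_unit_sphere ⟨v, hv⟩
  -- the ratio is invariant under scaling, so it is attained on the unit sphere
  refine ((isCompact_sphere 0 1).image_of_continuousOn hf).bddAbove.mono ?_
  rintro r ⟨v, hv, rfl⟩
  have hv' : ‖v‖ ≠ 0 := norm_ne_zero_iff.mpr hv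
  refine ⟨‖v‖⁻¹ • v, by simp [norm_smul, hv'], ?_⟩
  simp only [f, mulVec_smul, vnorm_smul, abs_inv, abs_norm]
  exact mul_div_mul_left _ _ (inv_ne_zero hv')

lemma vnorm_mulVec_le_of_wnorm_le (hH1 : H1.PosDef) (h : wnorm H1 H2 M ≤ c) (v : α → ℝ) :
    vnorm H2 (M *ᵥ v) ≤ c * vnorm H1 v := by
  rcases eq_or_ne v 0 with rfl | hv
  · simp
  rw [← div_le_iff₀ (vnorm_pos hH1 hv)]
  exact (le_csSup (bddAbove_wnorm_set hH1 H2 M) ⟨v, hv, rfl⟩).trans h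

lemma wnorm_nonneg (H1 : Matrix α α ℝ) (H2 : Matrix β β ℝ) (M : Matrix β α ℝ) :
    0 ≤ wnorm H1 H2 M :=
  Real.sSup_nonneg fun _ ⟨_, _, hr⟩ => hr ▸ div_nonneg (vnorm_nonneg _ _) (vnorm_nonneg _ _)

lemma wnorm_le_of_forall (hc : 0 ≤ c) (h : ∀ v, vnorm H2 (M *ᵥ v) ≤ c * vnorm H1 v) :
    wnorm H1 H2 M ≤ c :=
  Real.sSup_le (fun _ ⟨v, _, hr⟩ => hr ▸ div_le_of_le_mul₀ (vnorm_nonneg _ _) hc (h v)) hc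

lemma vnorm_fromBlocks (hH1 : H1.PosSemidef) (hH2 : H2.PosSemidef) (w : α ⊕ β → ℝ) :
    vnorm (fromBlocks H1 0 0 H2) w =
      √(vnorm H1 (w ∘ Sum.inl) ^ 2 + vnorm H2 (w ∘ Sum.inr) ^ 2) := by
  rw [vnorm, vnorm_sq hH1, vnorm_sq hH2, fromBlocks_mulVec]
  simp [dotProduct, Fintype.sum_sum_type]

lemma vnorm_fromBlocks_le (hH1 : H1.PosSemidef) (hH2 : H2.PosSemidef) (w : α ⊕ β → ℝ) :
    vnorm (fromBlocks H1 0 0 H2) w ≤ vnorm H1 (w ∘ Sum.inl) + vnorm H2 (w ∘ Sum.inr) := by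
  rw [vnorm_fromBlocks hH1 hH2, Real.sqrt_le_iff]
  have := vnorm_nonneg H1 (w ∘ Sum.inl)
  have := vnorm_nonneg H2 (w ∘ Sum.inr)
  constructor <;> nlinarith

end WNorm

lemma le_div_sq_mul_of_mul_le_of_sq_le {C t y z R : ℝ} (hC : 0 < C) (hy : 0 ≤ y) (hR : 0 ≤ R)
    (h₁ : C * y ≤ t * z) (h₂ : z ^ 2 ≤ y * R) : y ≤ t ^ 2 / C ^ 2 * R := by
  rw [div_mul_eq_mul_div, le_div_iff₀ (by positivity)]
  rcases hy.eq_or_lt with rfl | hy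
  · rw [zero_mul]; positivity
  have : (C * y) ^ 2 ≤ (t * z) ^ 2 := pow_le_pow_left₀ (by positivity) h₁ 2
  nlinarith [mul_le_mul_of_nonneg_left h₂ (sq_nonneg t)]

lemma add_mul_le_mul_sqrt {c k : ℝ} (hc : 0 ≤ c) (hk : 0 ≤ k) (p q : ℝ) :
    p + (1 + c) * (k * (c * p + q)) ≤ (1 + c + (c ^ 2 + c + 1) * k) * √(p ^ 2 + q ^ 2) := by
  have hp : p ≤ √(p ^ 2 + q ^ 2) := Real.le_sqrt_of_sq_le (by nlinarith)
  -- (c p + q)² ≤ (c² + 1)(p² + q²) and (1 + c)²(c² + 1) ≤ (c² + c + 1)²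
  have hcq : (1 + c) * (c * p + q) ≤ (c ^ 2 + c + 1) * √(p ^ 2 + q ^ 2) := by
    rw [← Real.sqrt_sq (by positivity : 0 ≤ c ^ 2 + c + 1), ← Real.sqrt_mul (sq_nonneg _)]
    refine Real.le_sqrt_of_sq_le ?_
    nlinarith [sq_nonneg (p - c * q), sq_nonneg c,
      mul_nonneg (sq_nonneg c) (add_nonneg (sq_nonneg p) (sq_nonneg q))]
  have hs := Real.sqrt_nonneg (p ^ 2 + q ^ 2)
  nlinarith [mul_le_mul_of_nonneg_left hcq hk, mul_nonneg hc hs]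

section SaddlePoint

variable {ι κ : Type*} [Fintype ι] [Fintype κ]
  {F H1 N : Matrix ι ι ℝ} {B : Matrix κ ι ℝ} {H2 : Matrix κ κ ℝ} {η C₁ C₂ : ℝ}

lemma vnorm_sq_eq_dotProduct_of_mulVec_eq_transpose_mulVec (hH1psd : H1.PosSemidef)
    (hH1 : H1 = ((1 : ℝ)/2) • (F + Fᵀ)) {z : ι → ℝ} {y : κ → ℝ} (hz : F *ᵥ z = Bᵀ *ᵥ y) :
    vnorm H1 z ^ 2 = y ⬝ᵥ (B *ᵥ z) := by
  rw [vnorm_sq_eq_dotProduct_mulVec hH1psd hH1, hz, dotProduct_mulVec, vecMul_transpose,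
    dotProduct_comm]

lemma vnorm_le_of_mulVec_eq_transpose_mulVec [DecidableEq κ]
    (hH1 : H1 = ((1 : ℝ)/2) • (F + Fᵀ)) (hH1pd : H1.PosDef) (hH2pd : H2.PosDef) (hC₁ : 0 ≤ C₁)
    (hB : wnorm H1 H2⁻¹ B ≤ C₁)
    {z : ι → ℝ} {y : κ → ℝ} (hz : F *ᵥ z = Bᵀ *ᵥ y) : vnorm H1 z ≤ C₁ * vnorm H2 y := by
  have h : vnorm H1 z ^ 2 ≤ vnorm H2 y * (C₁ * vnorm H1 z) :=
    calc vnorm H1 z ^ 2 = y ⬝ᵥ (B *ᵥ z) :=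
          vnorm_sq_eq_dotProduct_of_mulVec_eq_transpose_mulVec hH1pd.posSemidef hH1 hz
      _ ≤ vnorm H2 y * vnorm H2⁻¹ (B *ᵥ z) := dotProduct_le_vnorm_mul_vnorm_inv hH2pd _ _
      _ ≤ vnorm H2 y * (C₁ * vnorm H1 z) := by
          gcongr
          · exact vnorm_nonneg _ _
          · exact vnorm_mulVec_le_of_wnorm_le hH1pd hB z
  nlinarith [vnorm_nonneg H1 z, mul_nonneg hC₁ (vnorm_nonneg H2 y)]

lemma mul_vnorm_le_of_mulVec_eq_transpose_mulVec [DecidableEq ι] (hF : F = H1 + N)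
    (hH1pd : H1.PosDef) (hN : wnorm H1 H1⁻¹ N ≤ η)
    (hinfsup : ∀ x : κ → ℝ, x ≠ 0 → C₂ * vnorm H2 x ≤ vnorm H1⁻¹ (Bᵀ *ᵥ x))
    {z : ι → ℝ} {y : κ → ℝ} (hz : F *ᵥ z = Bᵀ *ᵥ y) :
    C₂ * vnorm H2 y ≤ (1 + η) * vnorm H1 z := by
  rcases eq_or_ne y 0 with rfl | hy
  · rw [vnorm_zero, mul_zero]
    exact mul_nonneg (by linarith [wnorm_nonneg H1 H1⁻¹ N]) (vnorm_nonneg _ _)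
  calc C₂ * vnorm H2 y ≤ vnorm H1⁻¹ (H1 *ᵥ z + N *ᵥ z) := by
        rw [← add_mulVec, ← hF, hz]; exact hinfsup y hy
    _ ≤ vnorm H1⁻¹ (H1 *ᵥ z) + vnorm H1⁻¹ (N *ᵥ z) :=
        vnorm_add_le hH1pd.inv.posSemidef _ _
    _ ≤ vnorm H1 z + η * vnorm H1 z := by
        rw [vnorm_inv_mulVec hH1pd]; gcongr; exact vnorm_mulVec_le_of_wnorm_le hH1pd hN z
    _ = (1 + η) * vnorm H1 z := by ring

structure SaddlePointSetting [DecidableEq ι] [DecidableEq κ] (F : Matrix ι ι ℝ)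
    (B : Matrix κ ι ℝ) (H1 N : Matrix ι ι ℝ) (H2 : Matrix κ κ ℝ) (η C₁ C₂ : ℝ) : Prop where
  symmPart : H1 = ((1 : ℝ)/2) • (F + Fᵀ)
  skewPart : N = ((1 : ℝ)/2) • (F - Fᵀ)
  posDef₁ : H1.PosDef
  posDef₂ : H2.PosDef
  C₁_nonneg : 0 ≤ C₁
  C₂_pos : 0 < C₂
  wnorm_skewPart_le : wnorm H1 H1⁻¹ N ≤ η
  wnorm_le : wnorm H1 H2⁻¹ B ≤ C₁
  infsup : ∀ x : κ → ℝ, x ≠ 0 → C₂ * vnorm H2 x ≤ vnorm H1⁻¹ (Bᵀ *ᵥ x)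

lemma fromBlocks_mulVec_eq_fromBlocks_mulVec_iff {u v : ι ⊕ κ → ℝ} :
    fromBlocks F Bᵀ B 0 *ᵥ u = fromBlocks F 0 0 H2 *ᵥ v ↔
      F *ᵥ (u ∘ Sum.inl) + Bᵀ *ᵥ (u ∘ Sum.inr) = F *ᵥ (v ∘ Sum.inl) ∧
        B *ᵥ (u ∘ Sum.inl) = H2 *ᵥ (v ∘ Sum.inr) := by
  simp [fromBlocks_mulVec, Sum.elim_eq_iff]

namespace SaddlePointSetting

variable [DecidableEq ι] [DecidableEq κ]

lemma eq_symmPart_add_skewPart (hS : SaddlePointSetting F B H1 N H2 η C₁ C₂) : F = H1 + N := by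
  rw [hS.symmPart, hS.skewPart]; module

lemma apriori_estimate (hS : SaddlePointSetting F B H1 N H2 η C₁ C₂) {x a : ι → ℝ} {y b : κ → ℝ}
    (h₁ : F *ᵥ x + Bᵀ *ᵥ y = F *ᵥ a) (h₂ : B *ᵥ x = H2 *ᵥ b) :
    vnorm H1 x + vnorm H2 y ≤
      vnorm H1 a + (1 + C₁) * ((1 + η) ^ 2 / C₂ ^ 2 * (C₁ * vnorm H1 a + vnorm H2 b)) := by
  set z := a - x
  have hz : F *ᵥ z = Bᵀ *ᵥ y := by rw [mulVec_sub, ← h₁]; abel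
  have hBz : B *ᵥ z = B *ᵥ a - H2 *ᵥ b := by rw [mulVec_sub, h₂]
  have hzy := vnorm_le_of_mulVec_eq_transpose_mulVec hS.symmPart hS.posDef₁ hS.posDef₂
    hS.C₁_nonneg hS.wnorm_le hz
  have hyz := mul_vnorm_le_of_mulVec_eq_transpose_mulVec hS.eq_symmPart_add_skewPart hS.posDef₁
    hS.wnorm_skewPart_le hS.infsup hz
  have henergy : vnorm H1 z ^ 2 ≤ vnorm H2 y * (C₁ * vnorm H1 a + vnorm H2 b) :=
    calc vnorm H1 z ^ 2 = y ⬝ᵥ (B *ᵥ a) + (-y) ⬝ᵥ (H2 *ᵥ b) := by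
          rw [vnorm_sq_eq_dotProduct_of_mulVec_eq_transpose_mulVec hS.posDef₁.posSemidef
            hS.symmPart hz, hBz, dotProduct_sub, neg_dotProduct, sub_eq_add_neg]
      _ ≤ vnorm H2 y * (C₁ * vnorm H1 a) + vnorm H2 (-y) * vnorm H2 b := by
          gcongr
          · exact (dotProduct_le_vnorm_mul_vnorm_inv hS.posDef₂ _ _).trans
              (mul_le_mul_of_nonneg_left (vnorm_mulVec_le_of_wnorm_le hS.posDef₁ hS.wnorm_le a)
                (vnorm_nonneg _ _))
          · exact dotProduct_mulVec_le_vnorm_mul_vnorm hS.posDef₂.posSemidef _ _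
      _ = vnorm H2 y * (C₁ * vnorm H1 a + vnorm H2 b) := by rw [vnorm_neg]; ring
  have hy := le_div_sq_mul_of_mul_le_of_sq_le hS.C₂_pos (vnorm_nonneg H2 y)
    (add_nonneg (mul_nonneg hS.C₁_nonneg (vnorm_nonneg _ _)) (vnorm_nonneg _ _)) hyz henergy
  have hx : vnorm H1 x ≤ vnorm H1 a + vnorm H1 z := by
    simpa [z] using vnorm_sub_le hS.posDef₁.posSemidef a z
  nlinarith [mul_le_mul_of_nonneg_left hy (by linarith [hS.C₁_nonneg] : 0 ≤ 1 + C₁)]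

lemma isUnit_det_fromBlocks (hS : SaddlePointSetting F B H1 N H2 η C₁ C₂) :
    IsUnit (fromBlocks F Bᵀ B 0).det := by
  rw [isUnit_iff_ne_zero]
  intro h
  obtain ⟨u, hu, hKu⟩ := exists_mulVec_eq_zero_iff.mpr h
  obtain ⟨h₁, h₂⟩ := fromBlocks_mulVec_eq_fromBlocks_mulVec_iff.mp
    (hKu.trans (mulVec_zero (fromBlocks F 0 0 H2)).symm)
  have h0 := hS.apriori_estimate h₁ h₂
  simp only [Pi.zero_comp, vnorm_zero, mul_zero, add_zero] at h0
  have hx : u ∘ Sum.inl = 0 := by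
    by_contra hx
    linarith [vnorm_pos hS.posDef₁ hx, vnorm_nonneg H2 (u ∘ Sum.inr)]
  have hy : u ∘ Sum.inr = 0 := by
    by_contra hy
    linarith [vnorm_pos hS.posDef₂ hy, vnorm_nonneg H1 (u ∘ Sum.inl)]
  exact hu (funext (Sum.rec (congrFun hx) (congrFun hy)))

end SaddlePointSetting

end SaddlePoint

theorem stmt_11_general
    {n m : ℕ} (F : Matrix (Fin n) (Fin n) ℝ) (B : Matrix (Fin m) (Fin n) ℝ)
    (H1 N : Matrix (Fin n) (Fin n) ℝ) (H2 : Matrix (Fin m) (Fin m) ℝ)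
    (η C₁ C₂ : ℝ) (hC1 : 0 < C₁) (hC2 : 0 < C₂)
    (hH1 : H1 = ((1 : ℝ)/2) • (F + Fᵀ)) (hN : N = ((1 : ℝ)/2) • (F - Fᵀ))
    (hH1pd : H1.PosDef) (hH2pd : H2.PosDef)
    (hNnorm : wnorm H1 H1⁻¹ N ≤ η)
    (hBnorm : wnorm H1 H2⁻¹ B ≤ C₁)
    (hinfsup : ∀ x : Fin m → ℝ, x ≠ 0 → C₂ * vnorm H2 x ≤ vnorm H1⁻¹ (Bᵀ *ᵥ x))
    (K MD H : Matrix (Fin n ⊕ Fin m) (Fin n ⊕ Fin m) ℝ)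
    (hK : K = fromBlocks F Bᵀ B 0)
    (hMD : MD = fromBlocks F 0 0 H2)
    (hH : H = fromBlocks H1 0 0 H2) :
    wnorm H H (MD⁻¹ * K)⁻¹ ≤ 1 + C₁ + (C₁ ^ 2 + C₁ + 1) * (1 + η) ^ 2 / C₂ ^ 2 := by
  classical
  subst hK hMD hH
  have hS : SaddlePointSetting F B H1 N H2 η C₁ C₂ :=
    ⟨hH1, hN, hH1pd, hH2pd, hC1.le, hC2, hNnorm, hBnorm, hinfsup⟩
  have hK := hS.isUnit_det_fromBlocks
  have hMD : IsUnit (fromBlocks F 0 0 H2).det := by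
    rw [det_fromBlocks_zero₁₂]
    exact (isUnit_det_of_eq_symmPart hH1pd hH1).mul ((isUnit_iff_isUnit_det H2).mp hH2pd.isUnit)
  rw [Matrix.mul_inv_rev, nonsing_inv_nonsing_inv _ hMD]
  refine wnorm_le_of_forall (by positivity) fun v => ?_
  obtain ⟨h₁, h₂⟩ := fromBlocks_mulVec_eq_fromBlocks_mulVec_iff.mp <| show
      fromBlocks F Bᵀ B 0 *ᵥ (((fromBlocks F Bᵀ B 0)⁻¹ * fromBlocks F 0 0 H2) *ᵥ v) =
        fromBlocks F 0 0 H2 *ᵥ v by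
    rw [mulVec_mulVec, ← Matrix.mul_assoc, mul_nonsing_inv _ hK, Matrix.one_mul]
  calc _ ≤ _ := vnorm_fromBlocks_le hH1pd.posSemidef hH2pd.posSemidef _
    _ ≤ _ := hS.apriori_estimate h₁ h₂
    _ ≤ _ := add_mul_le_mul_sqrt hC1.le (by positivity) _ _
    _ = (1 + C₁ + (C₁ ^ 2 + C₁ + 1) * (1 + η) ^ 2 / C₂ ^ 2) *
          vnorm (fromBlocks H1 0 0 H2) v := by
        rw [vnorm_fromBlocks hH1pd.posSemidef hH2pd.posSemidef, mul_div_assoc]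

theorem stmt_11
    {n m : ℕ} (F : Matrix (Fin n) (Fin n) ℝ) (B : Matrix (Fin m) (Fin n) ℝ)
    (H1 N : Matrix (Fin n) (Fin n) ℝ) (H2 : Matrix (Fin m) (Fin m) ℝ)
    (η C₁ C₂ : ℝ) (hη : 0 < η) (hC1 : 0 < C₁) (hC2 : 0 < C₂)
    (hH1 : H1 = ((1 : ℝ)/2) • (F + Fᵀ)) (hN : N = ((1 : ℝ)/2) • (F - Fᵀ))
    (hH1pd : H1.PosDef) (hH2pd : H2.PosDef)
    (hBrank : B.rank = m)
    (hNnorm : wnorm H1 H1⁻¹ N ≤ η)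
    (hBnorm : wnorm H1 H2⁻¹ B ≤ C₁)
    (hinfsup : ∀ x : Fin m → ℝ, x ≠ 0 → C₂ * vnorm H2 x ≤ vnorm H1⁻¹ (Bᵀ *ᵥ x))
    (K MD H : Matrix (Fin n ⊕ Fin m) (Fin n ⊕ Fin m) ℝ)
    (hK : K = fromBlocks F Bᵀ B 0)
    (hMD : MD = fromBlocks F 0 0 H2)
    (hH : H = fromBlocks H1 0 0 H2) :
    wnorm H H (MD⁻¹ * K)⁻¹ ≤ 1 + C₁ + (C₁ ^ 2 + C₁ + 1) * (1 + η) ^ 2 / C₂ ^ 2 :=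
  stmt_11_general F B H1 N H2 η C₁ C₂ hC1 hC2 hH1 hN hH1pd hH2pd hNnorm hBnorm hinfsup K MD H hK hMD
    hH
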